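/- For all integers m and n, the group with presentation on four generators c₁, d₁, c₂, d₂ with relators c₁c₂, d₁d₂, all six pairwise commutators [c₁,d₁], [c₁,c₂], [c₁,d₂], [d₁,c₂], [d₁,d₂], [c₂,d₂], together with the two additional relators c₁^m and d₂^n, is isomorphic to ℤ/mℤ × ℤ/nℤ; in particular it is trivial when m = ±1 and n = ±1, cyclic of order |n| when m = ±1 and |n| ≥ 2, and isomorphic to ℤ × ℤ/|n|ℤ when m = 0 and |n| ≥ 2. -/

import Mathlib

/-!
The relators `c₁c₂` and `d₁d₂` give `c₂ = c₁⁻¹` and `d₁ = d₂⁻¹`, so the group is generated by `c₁`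
and `d₂`, which commute and satisfy `c₁ ^ m = d₂ ^ n = 1`. Hence `(j, k) ↦ c₁ ^ j * d₂ ^ k` is a
well-defined homomorphism out of `ℤ/mℤ × ℤ/nℤ`; it is inverse to the homomorphism sending
`c₁ ↦ (1, 0)`, `d₂ ↦ (0, 1)`, which exists because every relator dies in an abelian group once
`c₂, d₁` are sent to the inverses of the images of `c₁, d₂`.
-/

namespace Stmt8

def c₁ : FreeGroup (Fin 4) := FreeGroup.of 0
def d₁ : FreeGroup (Fin 4) := FreeGroup.of 1
def c₂ : FreeGroup (Fin 4) := FreeGroup.of 2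
def d₂ : FreeGroup (Fin 4) := FreeGroup.of 3

def rels (m n : ℤ) : Set (FreeGroup (Fin 4)) :=
  { c₁ * c₂,
    d₁ * d₂,
    c₁ * d₁ * c₁⁻¹ * d₁⁻¹,
    c₁ * c₂ * c₁⁻¹ * c₂⁻¹,
    c₁ * d₂ * c₁⁻¹ * d₂⁻¹,
    d₁ * c₂ * d₁⁻¹ * c₂⁻¹,
    d₁ * d₂ * d₁⁻¹ * d₂⁻¹,
    c₂ * d₂ * c₂⁻¹ * d₂⁻¹,
    c₁ ^ m,
    d₂ ^ n }

open Multiplicative PresentedGroup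

section ZModLift

variable {G : Type*} [Group G] {m n : ℤ}

def zmodLift (a : G) (ha : a ^ m = 1) : Multiplicative (ZMod m.natAbs) →* G :=
  AddMonoidHom.toMultiplicativeLeft <| ZMod.lift m.natAbs
    ⟨zmultiplesHom (Additive G) (.ofMul a), by simpa [← ofMul_zpow] using ha⟩

theorem zmodLift_ofAdd_intCast (a : G) (ha : a ^ m = 1) (j : ℤ) :
    zmodLift a ha (ofAdd (j : ZMod m.natAbs)) = a ^ j := by
  simp [zmodLift, ZMod.lift_coe, ← ofMul_zpow]

theorem forall_zmod_ofAdd_intCast {k : ℕ} {P : Multiplicative (ZMod k) → Prop} :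
    (∀ x, P x) ↔ ∀ j : ℤ, P (ofAdd (j : ZMod k)) :=
  (ofAdd.surjective.comp ZMod.intCast_surjective).forall

theorem commute_zmodLift {a d : G} (had : Commute a d) (ha : a ^ m = 1) (hd : d ^ n = 1)
    (x : Multiplicative (ZMod m.natAbs)) (y : Multiplicative (ZMod n.natAbs)) :
    Commute (zmodLift a ha x) (zmodLift d hd y) := by
  revert x y
  simp only [forall_zmod_ofAdd_intCast, zmodLift_ofAdd_intCast]
  exact had.zpow_zpow

def zmodProdLift (a d : G) (had : Commute a d) (ha : a ^ m = 1) (hd : d ^ n = 1) :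
    Multiplicative (ZMod m.natAbs × ZMod n.natAbs) →* G :=
  (MonoidHom.noncommCoprod (zmodLift a ha) (zmodLift d hd) (commute_zmodLift had ha hd)).comp
    (MulEquiv.prodMultiplicative _ _).toMonoidHom

theorem zmodProdLift_ofAdd_intCast {a d : G} (had : Commute a d) (ha : a ^ m = 1)
    (hd : d ^ n = 1) (j k : ℤ) :
    zmodProdLift a d had ha hd (ofAdd ((j : ZMod m.natAbs), (k : ZMod n.natAbs))) =
      a ^ j * d ^ k := by
  simp [zmodProdLift, MulEquiv.prodMultiplicative, zmodLift_ofAdd_intCast]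

theorem zmodProdLift_ofAdd_one_zero {a d : G} (had : Commute a d) (ha : a ^ m = 1)
    (hd : d ^ n = 1) : zmodProdLift a d had ha hd (ofAdd (1, 0)) = a := by
  simpa using zmodProdLift_ofAdd_intCast had ha hd 1 0

theorem zmodProdLift_ofAdd_zero_one {a d : G} (had : Commute a d) (ha : a ^ m = 1)
    (hd : d ^ n = 1) : zmodProdLift a d had ha hd (ofAdd (0, 1)) = d := by
  simpa using zmodProdLift_ofAdd_intCast had ha hd 0 1

theorem monoidHom_ext_zmod_prod {a b : ℕ}
    {f g : Multiplicative (ZMod a × ZMod b) →* G}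
    (h₁ : f (ofAdd (1, 0)) = g (ofAdd (1, 0))) (h₂ : f (ofAdd (0, 1)) = g (ofAdd (0, 1))) :
    f = g := by
  have ofAdd_intCast_eq : ∀ j k : ℤ, ofAdd ((j : ZMod a), (k : ZMod b)) =
      (ofAdd (1, 0)) ^ j * (ofAdd (0, 1)) ^ k := by
    intro j k
    simp [← ofAdd_zsmul, ← ofAdd_add]
  refine MonoidHom.ext fun x => ?_
  obtain ⟨⟨j, k⟩, rfl⟩ := (ofAdd.surjective.comp
    (ZMod.intCast_surjective.prodMap ZMod.intCast_surjective)) x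
  dsimp only [Function.comp_apply, Prod.map_apply]
  rw [ofAdd_intCast_eq, map_mul, map_mul, map_zpow, map_zpow, map_zpow, map_zpow, h₁, h₂]

end ZModLift

section Presentation

variable (m n : ℤ)

-- `mk` is multiplicative by `rfl`, so e.g. `mk (c₁ * c₂) = 1` is literally `of 0 * of 2 = 1`.
theorem of_two_eq_inv : (of 2 : PresentedGroup (rels m n)) = (of 0)⁻¹ :=
  eq_inv_of_mul_eq_one_right (one_of_mem (x := c₁ * c₂) (by simp [rels]))

theorem of_one_eq_inv : (of 1 : PresentedGroup (rels m n)) = (of 3)⁻¹ :=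
  eq_inv_of_mul_eq_one_left (one_of_mem (x := d₁ * d₂) (by simp [rels]))

theorem commute_of_zero_of_three : Commute (of 0 : PresentedGroup (rels m n)) (of 3) :=
  commutatorElement_eq_one_iff_commute.mp
    (one_of_mem (x := c₁ * d₂ * c₁⁻¹ * d₂⁻¹) (by simp [rels]))

theorem of_zero_zpow : (of 0 : PresentedGroup (rels m n)) ^ m = 1 :=
  (map_zpow _ c₁ m).symm.trans (one_of_mem (by simp [rels]))

theorem of_three_zpow : (of 3 : PresentedGroup (rels m n)) ^ n = 1 :=
  (map_zpow _ d₂ n).symm.trans (one_of_mem (by simp [rels]))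

end Presentation

section Isomorphism

theorem intCast_self_zmod_natAbs (m : ℤ) : (m : ZMod m.natAbs) = 0 :=
  (ZMod.intCast_zmod_eq_zero_iff_dvd m m.natAbs).2 Int.natAbs_dvd_self

variable (m n : ℤ)

def genImage : Fin 4 → Multiplicative (ZMod m.natAbs × ZMod n.natAbs) :=
  ![ofAdd (1, 0), (ofAdd (0, 1))⁻¹, (ofAdd (1, 0))⁻¹, ofAdd (0, 1)]

theorem lift_genImage_rels : ∀ r ∈ rels m n, FreeGroup.lift (genImage m n) r = 1 := by
  simp only [rels, Set.mem_insert_iff, Set.mem_singleton_iff]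
  rintro r (rfl | rfl | rfl | rfl | rfl | rfl | rfl | rfl | rfl | rfl) <;>
    simp [c₁, d₁, c₂, d₂, genImage, ← ofAdd_zsmul, intCast_self_zmod_natAbs]

def toZModProd : PresentedGroup (rels m n) →* Multiplicative (ZMod m.natAbs × ZMod n.natAbs) :=
  toGroup (lift_genImage_rels m n)

def ofZModProd : Multiplicative (ZMod m.natAbs × ZMod n.natAbs) →* PresentedGroup (rels m n) :=
  zmodProdLift (of 0) (of 3) (commute_of_zero_of_three m n) (of_zero_zpow m n)
    (of_three_zpow m n)

theorem ofZModProd_comp_toZModProd :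
    (ofZModProd m n).comp (toZModProd m n) = MonoidHom.id _ := by
  refine PresentedGroup.ext fun i => ?_
  fin_cases i <;>
    simp [toZModProd, ofZModProd, genImage, toGroup.of, zmodProdLift_ofAdd_one_zero,
      zmodProdLift_ofAdd_zero_one, of_one_eq_inv, of_two_eq_inv]

theorem toZModProd_comp_ofZModProd :
    (toZModProd m n).comp (ofZModProd m n) = MonoidHom.id _ := by
  refine monoidHom_ext_zmod_prod ?_ ?_ <;>
    simp [toZModProd, ofZModProd, genImage, toGroup.of, zmodProdLift_ofAdd_one_zero,
      zmodProdLift_ofAdd_zero_one]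

end Isomorphism

theorem pi1_after_luttinger (m n : ℤ) :
    Nonempty (PresentedGroup (rels m n) ≃*
      Multiplicative (ZMod m.natAbs × ZMod n.natAbs)) :=
  ⟨(toZModProd m n).toMulEquiv (ofZModProd m n) (ofZModProd_comp_toZModProd m n)
    (toZModProd_comp_ofZModProd m n)⟩

end Stmt8
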